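/- Let $\lambda$ be a dominant weight and let $\mathcal{C}(\lambda) \subset \mathcal{X}(T)_{\mathbb{Q}}$ be the cone generated by the negatives of the positive roots in $\Phi^{+}(\lambda)$. Then $\mathcal{C}(\lambda)$ equals the cone generated by $\mathcal{P}(\lambda) - \lambda$, where $\mathcal{P}(\lambda)$ is the convex hull of the Weyl orbit $W\lambda$. Moreover $\mathcal{C}(\lambda) = \bigcup_{n \in \mathbb{N}} (\mathcal{P}(n\lambda) - n\lambda)$. -/

import Mathlib

open Finset

/-!  Combinatorial model of the weight theory of a connected semisimple algebraic
group (characteristic zero).  Weights are written in coordinates with respect to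
the basis `Δ` of simple roots (for a semisimple group every weight is a rational
combination of the simple roots), so the ambient space is `ι → ℚ`, the simple
root `α i` is `Pi.single i 1`, and `A i j = ⟨α i, (α j)ᵛ⟩` is the Cartan matrix.
`Φ` is the set of positive roots (in simple-root coordinates).  -/

variable {ι : Type*} [Fintype ι] [DecidableEq ι]

/-- `⟨x, (α j)ᵛ⟩`, the pairing of `x` (in simple-root coordinates) with the
`j`-th simple coroot. -/
def pairRt (A : ι → ι → ℤ) (x : ι → ℚ) (j : ι) : ℚ := ∑ i, x i * (A i j : ℚ)

/-- `x` is a dominant weight. -/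
def IsDom (A : ι → ι → ℤ) (x : ι → ℚ) : Prop := ∀ j, 0 ≤ pairRt A x j

/-- `x` lies in the weight lattice `Λ` (all coroot pairings are integers). -/
def IsIntegralWt (A : ι → ι → ℤ) (x : ι → ℚ) : Prop := ∀ j, ∃ m : ℤ, pairRt A x j = m

/-- `x ∈ ℕ[Δ]`, i.e. all simple-root coordinates of `x` are natural numbers. -/
def NatCoords (x : ι → ℚ) : Prop := ∀ i, ∃ m : ℕ, x i = m

/-- `x ∈ ℕ[S]`: `x` is a finite sum of elements of `S`. -/
def InNatSpan (S : Set (ι → ℚ)) (x : ι → ℚ) : Prop := x ∈ AddSubmonoid.closure S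

/-- `Φ⁺(λ)`: positive roots whose support over `Δ` meets `Supp(λ)`. -/
def PhiPlusLam (A : ι → ι → ℤ) (Φ : Set (ι → ℚ)) (lam : ι → ℚ) : Set (ι → ℚ) :=
  {β | β ∈ Φ ∧ ∃ i, pairRt A lam i ≠ 0 ∧ β i ≠ 0}

/-- `Φ` is the system of positive roots attached to the Cartan matrix `A` of a
(semisimple) root system. -/
structure IsPosSystem (A : ι → ι → ℤ) (Φ : Set (ι → ℚ)) : Prop where
  cartan_diag : ∀ i, A i i = 2
  cartan_offdiag : ∀ i j, i ≠ j → A i j ≤ 0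
  cartan_symm_zero : ∀ i j, A i j = 0 ↔ A j i = 0
  simple_mem : ∀ i, (Pi.single i 1 : ι → ℚ) ∈ Φ
  coords_nat : ∀ β ∈ Φ, NatCoords β
  reflect_mem : ∀ β ∈ Φ, ∀ j, β ≠ Pi.single j 1 →
    (β - pairRt A β j • (Pi.single j 1 : ι → ℚ)) ∈ Φ
  finite : Φ.Finite

/-- The simple reflection `s j` (as a self-map of the weight space). -/
def reflFun (A : ι → ι → ℤ) (j : ι) : Function.End (ι → ℚ) :=
  fun x => x - pairRt A x j • (Pi.single j 1 : ι → ℚ)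

/-- The Weyl group, realized as the monoid of self-maps generated by the simple
reflections (it is in fact a group, each generator being an involution). -/
def Weyl (A : ι → ι → ℤ) : Submonoid (Function.End (ι → ℚ)) :=
  Submonoid.closure {f | ∃ j, f = reflFun A j}

/-- The Weyl group orbit of `x`. -/
def weylOrbit (A : ι → ι → ℤ) (x : ι → ℚ) : Set (ι → ℚ) :=
  {y | ∃ w ∈ Weyl A, w x = y}

/-- `π ∈ Π(lam)`: `π` is a weight of the irreducible module `V(lam)`; we use the
standard combinatorial description `Π(λ) = W · Π⁺(λ)` with
`Π⁺(λ) = {μ dominant : μ ≤ λ}`. -/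
def IsWeightOf (A : ι → ι → ℤ) (lam π : ι → ℚ) : Prop :=
  ∃ μ, IsDom A μ ∧ NatCoords (lam - μ) ∧ π ∈ weylOrbit A μ

/-- The convex cone (of rational points) generated by a set `S`. -/
def coneOf (S : Set (ι → ℚ)) : Set (ι → ℚ) :=
  {x | ∃ (n : ℕ) (c : Fin n → ℚ) (v : Fin n → (ι → ℚ)),
    (∀ k, 0 ≤ c k ∧ v k ∈ S) ∧ x = ∑ k, c k • v k}

/-!
STATEMENT 6.  Let `lam` be a dominant weight and `C(lam)` the cone generated by
`Φ⁻(lam)` (the negatives of the positive roots non-orthogonal to `lam`).  Then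
`C(lam)` equals the cone generated by `P(lam) - lam`, where `P(lam)` is the
convex hull of the Weyl orbit `W·lam`; moreover
`C(lam) = ⋃_{n ∈ ℕ} (P(n·lam) - n·lam)`.
-/

set_option linter.unusedSectionVars false
set_option linter.unusedVariables false

-- ====== infrastructure ======

section Infra
variable {A : ι → ι → ℤ} {Φ : Set (ι → ℚ)}

lemma pairRt_add (A : ι → ι → ℤ) (x y : ι → ℚ) (j : ι) :
    pairRt A (x + y) j = pairRt A x j + pairRt A y j := by
  simp [pairRt, add_mul, Finset.sum_add_distrib]

lemma pairRt_smul (A : ι → ι → ℤ) (c : ℚ) (x : ι → ℚ) (j : ι) :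
    pairRt A (c • x) j = c * pairRt A x j := by
  simp [pairRt, Finset.mul_sum, mul_assoc]

lemma pairRt_sub (A : ι → ι → ℤ) (x y : ι → ℚ) (j : ι) :
    pairRt A (x - y) j = pairRt A x j - pairRt A y j := by
  simp [pairRt, sub_mul, Finset.sum_sub_distrib]

lemma pairRt_single (A : ι → ι → ℤ) (i j : ι) :
    pairRt A (Pi.single i 1) j = (A i j : ℚ) := by
  simp [pairRt, Pi.single_apply, Finset.sum_ite_eq']

/-- linearity in the useful combined form -/
def IsLin (f : Function.End (ι → ℚ)) : Prop :=
  ∀ (c : ℚ) (x y : ι → ℚ), f (c • x + y) = c • f x + f y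

lemma IsLin.map_add {f : Function.End (ι → ℚ)} (h : IsLin f) (x y : ι → ℚ) :
    f (x + y) = f x + f y := by
  have := h 1 x y; simpa using this

lemma IsLin.map_smul {f : Function.End (ι → ℚ)} (h : IsLin f) (c : ℚ) (x : ι → ℚ) :
    f (c • x) = c • f x := by
  have := h c x 0
  have h0 : f 0 = 0 := by
    have := h 1 0 0; simpa using this
  simpa [h0] using this

lemma IsLin.map_zero {f : Function.End (ι → ℚ)} (h : IsLin f) : f 0 = 0 := by
  have := h 1 0 0; simpa using this

lemma IsLin.map_neg {f : Function.End (ι → ℚ)} (h : IsLin f) (x : ι → ℚ) :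
    f (-x) = - f x := by
  have := h.map_smul (-1) x; simpa using this

lemma IsLin.map_sub {f : Function.End (ι → ℚ)} (h : IsLin f) (x y : ι → ℚ) :
    f (x - y) = f x - f y := by
  rw [sub_eq_add_neg, h.map_add, h.map_neg, sub_eq_add_neg]

lemma reflFun_lin (A : ι → ι → ℤ) (j : ι) : IsLin (reflFun A j) := by
  intro c x y
  simp only [reflFun, pairRt_add, pairRt_smul]
  module

lemma reflFun_invol (hΦ : IsPosSystem A Φ) (j : ι) :
    reflFun A j * reflFun A j = 1 := by
  funext x
  show reflFun A j (reflFun A j x) = x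
  simp only [reflFun, pairRt_sub, pairRt_smul, pairRt_single, hΦ.cartan_diag]
  push_cast
  module

lemma reflFun_mem (A : ι → ι → ℤ) (j : ι) : reflFun A j ∈ Weyl A :=
  Submonoid.subset_closure ⟨j, rfl⟩

lemma weyl_lin : ∀ w ∈ Weyl A, IsLin w := by
  intro w hw
  induction hw using Submonoid.closure_induction with
  | mem f hf => obtain ⟨j, rfl⟩ := hf; exact reflFun_lin A j
  | one => intro c x y; rfl
  | mul f g _ _ hf hg =>
      intro c x y
      show f (g (c • x + y)) = c • f (g x) + f (g y)
      rw [hg, hf]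

lemma weyl_inv (hΦ : IsPosSystem A Φ) : ∀ w ∈ Weyl A, ∃ w' ∈ Weyl A, w * w' = 1 ∧ w' * w = 1 := by
  intro w hw
  induction hw using Submonoid.closure_induction with
  | mem f hf =>
      obtain ⟨j, rfl⟩ := hf
      exact ⟨reflFun A j, reflFun_mem A j, reflFun_invol hΦ j, reflFun_invol hΦ j⟩
  | one => exact ⟨1, one_mem _, one_mul 1, one_mul 1⟩
  | mul f g hf hg ihf ihg =>
      obtain ⟨f', hf', hff', hf'f⟩ := ihf
      obtain ⟨g', hg', hgg', hg'g⟩ := ihg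
      refine ⟨g' * f', mul_mem hg' hf', ?_, ?_⟩
      · rw [mul_assoc, ← mul_assoc g, hgg', one_mul, hff']
      · rw [mul_assoc, ← mul_assoc f', hf'f, one_mul, hg'g]

end Infra

-- chunk 2: roots, finiteness of W, the invariant form
section Chunk2
variable {ι : Type*} [Fintype ι] [DecidableEq ι]
variable {A : ι → ι → ℤ} {Φ : Set (ι → ℚ)}

lemma single_one_ne_zero (i : ι) : (Pi.single i 1 : ι → ℚ) ≠ 0 := by
  intro h
  have := congrFun h i
  rw [Pi.single_eq_same] at this
  exact one_ne_zero this

/-- `β` is a root (positive or negative). -/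
def IsRoot (Φ : Set (ι → ℚ)) (β : ι → ℚ) : Prop := β ≠ 0 ∧ (β ∈ Φ ∨ -β ∈ Φ)

lemma IsLin.map_sum {f : Function.End (ι → ℚ)} (h : IsLin f) {κ : Type*} (s : Finset κ)
    (g : κ → (ι → ℚ)) : f (∑ k ∈ s, g k) = ∑ k ∈ s, f (g k) := by
  classical
  induction s using Finset.induction with
  | empty => simpa using h.map_zero
  | insert _ _ hk ih => rw [Finset.sum_insert hk, Finset.sum_insert hk, h.map_add, ih]

lemma refl_single (hΦ : IsPosSystem A Φ) (j : ι) :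
    reflFun A j (Pi.single j 1) = -(Pi.single j 1 : ι → ℚ) := by
  simp only [reflFun, pairRt_single, hΦ.cartan_diag]
  push_cast
  module

lemma refl_ne_zero (hΦ : IsPosSystem A Φ) (j : ι) {β : ι → ℚ} (h : β ≠ 0) :
    reflFun A j β ≠ 0 := by
  intro h0
  apply h
  have h2 := congrFun (reflFun_invol hΦ j) β
  have : (reflFun A j * reflFun A j) β = reflFun A j (reflFun A j β) := rfl
  rw [this, h0] at h2
  have hz : reflFun A j (0 : ι → ℚ) = 0 := (reflFun_lin A j).map_zero
  rw [hz] at h2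
  exact h2.symm

lemma refl_maps_phi (hΦ : IsPosSystem A Φ) (j : ι) {β : ι → ℚ} (hβ : β ∈ Φ) (h0 : β ≠ 0) :
    reflFun A j β ∈ Φ ∨ -(reflFun A j β) ∈ Φ := by
  by_cases hs : β = Pi.single j 1
  · right
    rw [hs, refl_single hΦ, neg_neg]
    exact hΦ.simple_mem j
  · left
    exact hΦ.reflect_mem β hβ j hs

lemma refl_maps_root (hΦ : IsPosSystem A Φ) (j : ι) {β : ι → ℚ} (h : IsRoot Φ β) :
    IsRoot Φ (reflFun A j β) := by
  obtain ⟨h0, hc⟩ := h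
  refine ⟨refl_ne_zero hΦ j h0, ?_⟩
  rcases hc with hβ | hβ
  · exact refl_maps_phi hΦ j hβ h0
  · have : reflFun A j (-β) ∈ Φ ∨ -(reflFun A j (-β)) ∈ Φ :=
      refl_maps_phi hΦ j hβ (by simpa using h0)
    rw [(reflFun_lin A j).map_neg, neg_neg] at this
    tauto

lemma weyl_maps_root (hΦ : IsPosSystem A Φ) :
    ∀ w ∈ Weyl A, ∀ β, IsRoot Φ β → IsRoot Φ (w β) := by
  intro w hw
  induction hw using Submonoid.closure_induction with
  | mem f hf => obtain ⟨j, rfl⟩ := hf; exact fun β h => refl_maps_root hΦ j h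
  | one => exact fun β h => h
  | mul f g _ _ ihf ihg =>
      intro β h
      exact ihf _ (ihg _ h)

lemma weyl_finite (hΦ : IsPosSystem A Φ) : (Weyl A : Set (Function.End (ι → ℚ))).Finite := by
  classical
  set R : Set (ι → ℚ) := Φ ∪ (fun x => -x) '' Φ with hR
  have hRfin : R.Finite := hΦ.finite.union (hΦ.finite.image _)
  set F : Function.End (ι → ℚ) → (ι → (ι → ℚ)) := fun w i => w (Pi.single i 1) with hF
  have hmaps : ∀ w ∈ (Weyl A : Set (Function.End (ι → ℚ))), F w ∈ Set.pi Set.univ (fun _ => R) := by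
    intro w hw i _
    have hroot : IsRoot Φ (w (Pi.single i 1)) :=
      weyl_maps_root hΦ w hw _ ⟨single_one_ne_zero i, Or.inl (hΦ.simple_mem i)⟩
    rcases hroot.2 with h | h
    · exact Or.inl h
    · exact Or.inr ⟨-(w (Pi.single i 1)), h, by simp [hF]⟩
  have hinj : Set.InjOn F (Weyl A : Set (Function.End (ι → ℚ))) := by
    intro w1 h1 w2 h2 he
    funext x
    have hx : x = ∑ i, Pi.single i (x i) := by
      rw [Finset.univ_sum_single x]
    have hsingle : ∀ i : ι, Pi.single i (x i) = x i • (Pi.single i 1 : ι → ℚ) := by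
      intro i; rw [← Pi.single_smul]; simp
    have e1 : ∀ (w : Function.End (ι → ℚ)), IsLin w → w x = ∑ i, x i • (F w i) := by
      intro w hlin
      calc w x = w (∑ i, x i • (Pi.single i 1 : ι → ℚ)) := by
                  rw [← funext hsingle]
                  exact congrArg w hx
        _ = ∑ i, w (x i • (Pi.single i 1 : ι → ℚ)) := hlin.map_sum _ _
        _ = ∑ i, x i • (F w i) := by
              refine Finset.sum_congr rfl fun i _ => ?_
              rw [hlin.map_smul]
    rw [e1 w1 (weyl_lin w1 h1), e1 w2 (weyl_lin w2 h2), he]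
  have hfin : (F '' (Weyl A : Set (Function.End (ι → ℚ)))).Finite := by
    apply Set.Finite.subset (Set.Finite.pi (fun _ => hRfin))
    intro g hg
    obtain ⟨w, hw, rfl⟩ := hg
    exact hmaps w hw
  exact Set.Finite.of_finite_image hfin hinj

noncomputable def Wfin (hΦ : IsPosSystem A Φ) : Finset (Function.End (ι → ℚ)) :=
  (weyl_finite hΦ).toFinset

lemma mem_Wfin {hΦ : IsPosSystem A Φ} {w : Function.End (ι → ℚ)} :
    w ∈ Wfin hΦ ↔ w ∈ Weyl A := Set.Finite.mem_toFinset _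

/-- standard dot product -/
def dotQ (x y : ι → ℚ) : ℚ := ∑ i, x i * y i

lemma dotQ_comm (x y : ι → ℚ) : dotQ x y = dotQ y x := by
  simp [dotQ, mul_comm]

lemma dotQ_self_nonneg (x : ι → ℚ) : 0 ≤ dotQ x x :=
  Finset.sum_nonneg fun i _ => mul_self_nonneg _

lemma dotQ_self_pos {x : ι → ℚ} (h : x ≠ 0) : 0 < dotQ x x := by
  have hne : ∃ i, x i ≠ 0 := by
    by_contra hc
    push_neg at hc
    exact h (funext hc)
  obtain ⟨i, hi⟩ := hne
  apply Finset.sum_pos' (fun j _ => mul_self_nonneg _)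
  exact ⟨i, Finset.mem_univ i, mul_self_pos.2 hi⟩

/-- W-invariant positive definite form -/
noncomputable def Bf (hΦ : IsPosSystem A Φ) (x y : ι → ℚ) : ℚ :=
  ∑ w ∈ Wfin hΦ, dotQ (w x) (w y)

lemma Bf_symm (hΦ : IsPosSystem A Φ) (x y : ι → ℚ) : Bf hΦ x y = Bf hΦ y x := by
  unfold Bf; exact Finset.sum_congr rfl fun w _ => dotQ_comm _ _

lemma Bf_add_right (hΦ : IsPosSystem A Φ) (x y z : ι → ℚ) :
    Bf hΦ x (y + z) = Bf hΦ x y + Bf hΦ x z := by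
  unfold Bf
  rw [← Finset.sum_add_distrib]
  refine Finset.sum_congr rfl fun w hw => ?_
  rw [(weyl_lin w (mem_Wfin.1 hw)).map_add]
  simp [dotQ, mul_add, Finset.sum_add_distrib]

lemma Bf_smul_right (hΦ : IsPosSystem A Φ) (c : ℚ) (x y : ι → ℚ) :
    Bf hΦ x (c • y) = c * Bf hΦ x y := by
  unfold Bf
  rw [Finset.mul_sum]
  refine Finset.sum_congr rfl fun w hw => ?_
  rw [(weyl_lin w (mem_Wfin.1 hw)).map_smul]
  unfold dotQ
  rw [Finset.mul_sum]
  refine Finset.sum_congr rfl fun i _ => ?_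
  simp only [Pi.smul_apply, smul_eq_mul]
  ring

lemma Bf_add_left (hΦ : IsPosSystem A Φ) (x y z : ι → ℚ) :
    Bf hΦ (x + y) z = Bf hΦ x z + Bf hΦ y z := by
  rw [Bf_symm hΦ (x + y) z, Bf_add_right hΦ z x y, Bf_symm hΦ z x, Bf_symm hΦ z y]

lemma Bf_smul_left (hΦ : IsPosSystem A Φ) (c : ℚ) (x y : ι → ℚ) :
    Bf hΦ (c • x) y = c * Bf hΦ x y := by
  rw [Bf_symm hΦ (c • x) y, Bf_smul_right hΦ c y x, Bf_symm hΦ y x]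

lemma Bf_neg_right (hΦ : IsPosSystem A Φ) (x y : ι → ℚ) :
    Bf hΦ x (-y) = - Bf hΦ x y := by
  have h := Bf_smul_right hΦ (-1) x y
  rw [neg_one_smul] at h
  rw [h]
  ring

lemma Bf_neg_left (hΦ : IsPosSystem A Φ) (x y : ι → ℚ) :
    Bf hΦ (-x) y = - Bf hΦ x y := by
  rw [Bf_symm hΦ (-x) y, Bf_neg_right hΦ y x, Bf_symm hΦ y x]

lemma Bf_sub_right (hΦ : IsPosSystem A Φ) (x y z : ι → ℚ) :
    Bf hΦ x (y - z) = Bf hΦ x y - Bf hΦ x z := by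
  rw [sub_eq_add_neg, Bf_add_right hΦ x y (-z), Bf_neg_right hΦ x z, sub_eq_add_neg]

lemma Bf_sub_left (hΦ : IsPosSystem A Φ) (x y z : ι → ℚ) :
    Bf hΦ (x - y) z = Bf hΦ x z - Bf hΦ y z := by
  rw [Bf_symm hΦ (x - y) z, Bf_sub_right hΦ z x y, Bf_symm hΦ z x, Bf_symm hΦ z y]

lemma Bf_self_nonneg (hΦ : IsPosSystem A Φ) (x : ι → ℚ) : 0 ≤ Bf hΦ x x :=
  Finset.sum_nonneg fun w _ => dotQ_self_nonneg _

lemma Bf_self_pos (hΦ : IsPosSystem A Φ) {x : ι → ℚ} (h : x ≠ 0) : 0 < Bf hΦ x x := by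
  have h1 : (1 : Function.End (ι → ℚ)) ∈ Wfin hΦ := mem_Wfin.2 (one_mem _)
  have h2 : dotQ ((1 : Function.End (ι → ℚ)) x) ((1 : Function.End (ι → ℚ)) x) ≤ Bf hΦ x x :=
    Finset.single_le_sum (f := fun w : Function.End (ι → ℚ) => dotQ (w x) (w x))
      (fun w _ => dotQ_self_nonneg _) h1
  have h3 : dotQ ((1 : Function.End (ι → ℚ)) x) ((1 : Function.End (ι → ℚ)) x) = dotQ x x := rfl
  rw [h3] at h2
  exact lt_of_lt_of_le (dotQ_self_pos h) h2

lemma Bf_eq_zero_iff (hΦ : IsPosSystem A Φ) {x : ι → ℚ} (h : Bf hΦ x x = 0) : x = 0 := by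
  by_contra hc
  exact absurd h (ne_of_gt (Bf_self_pos hΦ hc))

lemma Bf_invariant (hΦ : IsPosSystem A Φ) {u : Function.End (ι → ℚ)} (hu : u ∈ Weyl A)
    (x y : ι → ℚ) : Bf hΦ (u x) (u y) = Bf hΦ x y := by
  obtain ⟨u', hu', huu', hu'u⟩ := weyl_inv hΦ u hu
  unfold Bf
  refine Finset.sum_nbij' (fun w => w * u) (fun w => w * u') ?_ ?_ ?_ ?_ ?_
  · intro w hw; exact mem_Wfin.2 (mul_mem (mem_Wfin.1 hw) hu)
  · intro w hw; exact mem_Wfin.2 (mul_mem (mem_Wfin.1 hw) hu')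
  · intro w hw; show w * u * u' = w; rw [mul_assoc, huu', mul_one]
  · intro w hw; show w * u' * u = w; rw [mul_assoc, hu'u, mul_one]
  · intro w hw; rfl

lemma pairRt_eq_Bf (hΦ : IsPosSystem A Φ) (x : ι → ℚ) (j : ι) :
    pairRt A x j * Bf hΦ (Pi.single j 1) (Pi.single j 1) =
      2 * Bf hΦ x (Pi.single j 1) := by
  have key := Bf_invariant hΦ (reflFun_mem A j) x (Pi.single j 1)
  rw [refl_single hΦ j] at key
  have hrx : reflFun A j x = x - pairRt A x j • (Pi.single j 1 : ι → ℚ) := rfl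
  rw [hrx, Bf_neg_right, Bf_sub_left, Bf_smul_left] at key
  linarith

end Chunk2

-- chunk 3: sRef, words, deletion, dominant uniqueness
section Chunk3
variable {ι : Type*} [Fintype ι] [DecidableEq ι]
variable {A : ι → ι → ℤ} {Φ : Set (ι → ℚ)}

lemma vec_decomp (x : ι → ℚ) : x = ∑ i, x i • (Pi.single i 1 : ι → ℚ) := by
  conv_lhs => rw [← Finset.univ_sum_single x]
  refine Finset.sum_congr rfl fun i _ => ?_
  rw [← Pi.single_smul]; simp

lemma Bf_zero_right (hΦ : IsPosSystem A Φ) (x : ι → ℚ) : Bf hΦ x 0 = 0 := by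
  have h := Bf_smul_right hΦ 0 x x
  rw [zero_smul] at h
  simpa using h

lemma Bf_sum_right (hΦ : IsPosSystem A Φ) {κ : Type*} (x : ι → ℚ) (s : Finset κ)
    (g : κ → (ι → ℚ)) : Bf hΦ x (∑ k ∈ s, g k) = ∑ k ∈ s, Bf hΦ x (g k) := by
  classical
  induction s using Finset.induction with
  | empty => simpa using Bf_zero_right hΦ x
  | insert _ _ hk ih => rw [Finset.sum_insert hk, Finset.sum_insert hk, Bf_add_right, ih]

lemma phi_nonneg (hΦ : IsPosSystem A Φ) {β : ι → ℚ} (hβ : β ∈ Φ) (i : ι) : 0 ≤ β i := by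
  obtain ⟨m, hm⟩ := hΦ.coords_nat β hβ i
  rw [hm]; positivity

lemma not_pos_and_neg (hΦ : IsPosSystem A Φ) {β : ι → ℚ} (hβ : β ∈ Φ) (hnβ : -β ∈ Φ) :
    β = 0 := by
  funext i
  have h1 := phi_nonneg hΦ hβ i
  have h2 := phi_nonneg hΦ hnβ i
  simp only [Pi.neg_apply] at h2
  have : β i = 0 := le_antisymm (by linarith) h1
  simpa using this

lemma Bf_single_nonneg (hΦ : IsPosSystem A Φ) {μ : ι → ℚ} (hdom : IsDom A μ) (i : ι) :
    0 ≤ Bf hΦ μ (Pi.single i 1) := by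
  have h := pairRt_eq_Bf hΦ μ i
  have hpos := Bf_self_pos hΦ (single_one_ne_zero (ι := ι) i)
  nlinarith [mul_nonneg (hdom i) hpos.le]

lemma Bf_phi_nonneg (hΦ : IsPosSystem A Φ) {μ : ι → ℚ} (hdom : IsDom A μ) {γ : ι → ℚ}
    (hγ : γ ∈ Φ) : 0 ≤ Bf hΦ μ γ := by
  rw [vec_decomp γ, Bf_sum_right]
  refine Finset.sum_nonneg fun i _ => ?_
  rw [Bf_smul_right]
  exact mul_nonneg (phi_nonneg hΦ hγ i) (Bf_single_nonneg hΦ hdom i)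

/-- the reflection in an arbitrary vector w.r.t. the invariant form -/
noncomputable def sRef (hΦ : IsPosSystem A Φ) (β : ι → ℚ) : Function.End (ι → ℚ) :=
  fun x => x - (2 * Bf hΦ x β / Bf hΦ β β) • β

lemma sRef_neg (hΦ : IsPosSystem A Φ) (β : ι → ℚ) : sRef hΦ (-β) = sRef hΦ β := by
  funext x
  show x - (2 * Bf hΦ x (-β) / Bf hΦ (-β) (-β)) • (-β) = x - (2 * Bf hΦ x β / Bf hΦ β β) • β
  rw [Bf_neg_right, Bf_neg_left, Bf_neg_right, neg_neg, smul_neg]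
  rw [show 2 * -Bf hΦ x β = -(2 * Bf hΦ x β) by ring, neg_div, neg_smul, neg_neg]

lemma sRef_single (hΦ : IsPosSystem A Φ) (j : ι) :
    sRef hΦ (Pi.single j 1) = reflFun A j := by
  funext x
  have hB : Bf hΦ (Pi.single j 1 : ι → ℚ) (Pi.single j 1) ≠ 0 :=
    ne_of_gt (Bf_self_pos hΦ (single_one_ne_zero j))
  have h := pairRt_eq_Bf hΦ x j
  have hc : 2 * Bf hΦ x (Pi.single j 1) / Bf hΦ (Pi.single j 1 : ι → ℚ) (Pi.single j 1)
      = pairRt A x j := by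
    field_simp
    linarith
  show x - (2 * Bf hΦ x (Pi.single j 1) / Bf hΦ (Pi.single j 1 : ι → ℚ) (Pi.single j 1))
      • (Pi.single j 1 : ι → ℚ) = reflFun A j x
  rw [hc]
  rfl

lemma sRef_conj (hΦ : IsPosSystem A Φ) {u : Function.End (ι → ℚ)} (hu : u ∈ Weyl A)
    (β x : ι → ℚ) : u (sRef hΦ β x) = sRef hΦ (u β) (u x) := by
  have hlin := weyl_lin u hu
  show u (x - (2 * Bf hΦ x β / Bf hΦ β β) • β)
      = u x - (2 * Bf hΦ (u x) (u β) / Bf hΦ (u β) (u β)) • (u β)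
  rw [hlin.map_sub, hlin.map_smul, Bf_invariant hΦ hu, Bf_invariant hΦ hu]

/-- product of simple reflections along a word -/
def prodRefl (A : ι → ι → ℤ) (l : List ι) : Function.End (ι → ℚ) :=
  (l.map (reflFun A)).prod

lemma prodRefl_nil (A : ι → ι → ℤ) : prodRefl A ([] : List ι) = 1 := rfl

lemma prodRefl_cons (A : ι → ι → ℤ) (j : ι) (l : List ι) :
    prodRefl A (j :: l) = reflFun A j * prodRefl A l := by
  simp [prodRefl]

lemma prodRefl_append (A : ι → ι → ℤ) (l₁ l₂ : List ι) :
    prodRefl A (l₁ ++ l₂) = prodRefl A l₁ * prodRefl A l₂ := by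
  simp [prodRefl]

lemma prodRefl_mem (A : ι → ι → ℤ) (l : List ι) : prodRefl A l ∈ Weyl A := by
  induction l with
  | nil => exact one_mem _
  | cons j t ih => rw [prodRefl_cons]; exact mul_mem (reflFun_mem A j) ih

lemma weyl_word {w : Function.End (ι → ℚ)} (hw : w ∈ Weyl A) :
    ∃ l : List ι, w = prodRefl A l := by
  obtain ⟨L, hL, hprod⟩ := Submonoid.exists_list_of_mem_closure hw
  clear hw
  induction L generalizing w with
  | nil => exact ⟨[], by rw [← hprod]; rfl⟩
  | cons f t ih =>
      obtain ⟨j, rfl⟩ := hL f List.mem_cons_self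
      obtain ⟨l, hl⟩ := ih (w := t.prod) (fun y hy => hL y (List.mem_cons_of_mem _ hy)) rfl
      refine ⟨j :: l, ?_⟩
      rw [← hprod, List.prod_cons, prodRefl_cons, hl]

lemma claimE (hΦ : IsPosSystem A Φ) :
    ∀ (l : List ι) (β : ι → ℚ), β ∈ Φ → β ≠ 0 → -(prodRefl A l β) ∈ Φ →
      ∃ l₁ m l₂, l = l₁ ++ m :: l₂ ∧ prodRefl A l₂ β = Pi.single m 1 := by
  intro l
  induction l with
  | nil =>
      intro β hβ h0 hneg
      exact absurd (not_pos_and_neg hΦ hβ (by rw [prodRefl_nil] at hneg; exact hneg)) h0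
  | cons j t ih =>
      intro β hβ h0 hneg
      have hroot : IsRoot Φ (prodRefl A t β) :=
        weyl_maps_root hΦ _ (prodRefl_mem A t) β ⟨h0, Or.inl hβ⟩
      rcases hroot.2 with hpos | hneg'
      · -- prodRefl t β positive; so it must be the simple root e_j
        rw [prodRefl_cons] at hneg
        have happ : (reflFun A j * prodRefl A t) β = reflFun A j (prodRefl A t β) := rfl
        rw [happ] at hneg
        by_cases hs : prodRefl A t β = Pi.single j 1
        · exact ⟨[], j, t, rfl, hs⟩
        · exfalso
          have hmem : reflFun A j (prodRefl A t β) ∈ Φ := hΦ.reflect_mem _ hpos j hs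
          have hz : reflFun A j (prodRefl A t β) = 0 :=
            not_pos_and_neg hΦ hmem hneg
          exact refl_ne_zero hΦ j hroot.1 hz
      · obtain ⟨l₁, m, l₂, hsplit, hfin⟩ := ih β hβ h0 hneg'
        exact ⟨j :: l₁, m, l₂, by rw [hsplit]; rfl, hfin⟩

lemma deletion (hΦ : IsPosSystem A Φ) (l : List ι) (j : ι)
    (hneg : -(prodRefl A l (Pi.single j 1)) ∈ Φ) :
    ∃ l' : List ι, l.length = l'.length + 1 ∧
      prodRefl A l * reflFun A j = prodRefl A l' := by
  obtain ⟨l₁, m, l₂, hsplit, hfix⟩ :=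
    claimE hΦ l (Pi.single j 1) (hΦ.simple_mem j) (single_one_ne_zero j) hneg
  have hconj : prodRefl A l₂ * reflFun A j = reflFun A m * prodRefl A l₂ := by
    funext x
    show prodRefl A l₂ (reflFun A j x) = reflFun A m (prodRefl A l₂ x)
    rw [← sRef_single hΦ j, sRef_conj hΦ (prodRefl_mem A l₂), hfix, sRef_single hΦ m]
  refine ⟨l₁ ++ l₂, ?_, ?_⟩
  · rw [hsplit]; simp; ring
  · rw [hsplit, prodRefl_append, prodRefl_cons, prodRefl_append]
    simp only [mul_assoc]
    rw [hconj, ← mul_assoc (reflFun A m), reflFun_invol hΦ m, one_mul]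

lemma P3' (hΦ : IsPosSystem A Φ) :
    ∀ (n : ℕ) (l : List ι), l.length ≤ n →
      prodRefl A l = 1 ∨ ∃ j, -(prodRefl A l (Pi.single j 1)) ∈ Φ := by
  intro n
  induction n with
  | zero =>
      intro l hl
      left
      rw [List.length_eq_zero_iff.1 (Nat.le_zero.1 hl)]
      rfl
  | succ n ih =>
      intro l hl
      match l with
      | [] => left; rfl
      | j₁ :: t =>
        have ht : t.length ≤ n := by simpa using hl
        rcases ih t ht with h1 | ⟨j, hj⟩
        · right
          refine ⟨j₁, ?_⟩
          rw [prodRefl_cons, h1, mul_one, refl_single hΦ j₁, neg_neg]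
          exact hΦ.simple_mem j₁
        · by_cases hcase : -(prodRefl A t (Pi.single j 1)) = Pi.single j₁ 1
          · -- w = u * s_j, deletion
            have hw : prodRefl A (j₁ :: t) = prodRefl A t * reflFun A j := by
              rw [prodRefl_cons]
              funext x
              show reflFun A j₁ (prodRefl A t x) = prodRefl A t (reflFun A j x)
              rw [← sRef_single hΦ j, sRef_conj hΦ (prodRefl_mem A t)]
              have h3 : prodRefl A t (Pi.single j 1) = -(Pi.single j₁ 1 : ι → ℚ) := by
                rw [← hcase]; simp
              rw [h3, sRef_neg, sRef_single hΦ j₁]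
            obtain ⟨l', hlen, hprod⟩ := deletion hΦ t j hj
            have hl' : l'.length ≤ n := by omega
            have hw2 : prodRefl A (j₁ :: t) = prodRefl A l' := by rw [hw, hprod]
            rcases ih l' hl' with h | ⟨j', hj'⟩
            · left; rw [hw2, h]
            · right; exact ⟨j', by rw [hw2]; exact hj'⟩
          · -- still a negative root after applying s_{j₁}
            right
            refine ⟨j, ?_⟩
            rw [prodRefl_cons]
            have happ : (reflFun A j₁ * prodRefl A t) (Pi.single j 1)
                = reflFun A j₁ (prodRefl A t (Pi.single j 1)) := rfl
            rw [happ]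
            have hmem : reflFun A j₁ (-(prodRefl A t (Pi.single j 1))) ∈ Φ :=
              hΦ.reflect_mem _ hj j₁ hcase
            rw [(reflFun_lin A j₁).map_neg] at hmem
            simpa using hmem

lemma dominant_unique_aux (hΦ : IsPosSystem A Φ) (lam : ι → ℚ) (hdom : IsDom A lam) :
    ∀ (n : ℕ) (l : List ι), l.length ≤ n → IsDom A (prodRefl A l lam) →
      prodRefl A l lam = lam := by
  intro n
  induction n with
  | zero =>
      intro l hl _
      rw [List.length_eq_zero_iff.1 (Nat.le_zero.1 hl)]
      rfl
  | succ n ih =>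
      intro l hl hmu
      rcases P3' hΦ (n + 1) l hl with h1 | ⟨j, hj⟩
      · rw [h1]; rfl
      · have hwW : prodRefl A l ∈ Weyl A := prodRefl_mem A l
        -- show pairRt lam j = 0
        have hc : pairRt A lam j = 0 := by
          by_contra hc0
          have hcpos : 0 < pairRt A lam j := lt_of_le_of_ne (hdom j) (Ne.symm hc0)
          have hinv : Bf hΦ (prodRefl A l lam) (prodRefl A l (Pi.single j 1))
              = Bf hΦ lam (Pi.single j 1) :=
            Bf_invariant hΦ hwW _ _
          have hBee : 0 < Bf hΦ (Pi.single j 1 : ι → ℚ) (Pi.single j 1) :=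
            Bf_self_pos hΦ (single_one_ne_zero j)
          have hBpos : 0 < Bf hΦ lam (Pi.single j 1) := by
            have h := pairRt_eq_Bf hΦ lam j
            nlinarith
          have hBneg : Bf hΦ (prodRefl A l lam) (prodRefl A l (Pi.single j 1)) ≤ 0 := by
            have h4 : prodRefl A l (Pi.single j 1)
                = -(-(prodRefl A l (Pi.single j 1))) := by simp
            rw [h4, Bf_neg_right]
            have := Bf_phi_nonneg hΦ hmu hj
            linarith
          linarith
        have hfix : reflFun A j lam = lam := by
          show lam - pairRt A lam j • (Pi.single j 1 : ι → ℚ) = lam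
          rw [hc]; simp
        obtain ⟨l', hlen, hprod⟩ := deletion hΦ l j hj
        have hl' : l'.length ≤ n := by omega
        have heq : prodRefl A l' lam = prodRefl A l lam := by
          rw [← hprod]
          show prodRefl A l (reflFun A j lam) = prodRefl A l lam
          rw [hfix]
        have := ih l' hl' (by rw [heq]; exact hmu)
        rw [heq] at this
        exact this

lemma dominant_unique (hΦ : IsPosSystem A Φ) (lam : ι → ℚ) (hdom : IsDom A lam)
    {w : Function.End (ι → ℚ)} (hw : w ∈ Weyl A) (hmu : IsDom A (w lam)) :
    w lam = lam := by
  obtain ⟨l, rfl⟩ := weyl_word hw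
  exact dominant_unique_aux hΦ lam hdom l.length l le_rfl hmu

end Chunk3

-- chunk 4
section Chunk4
variable {ι : Type*} [Fintype ι] [DecidableEq ι]
variable {A : ι → ι → ℤ} {Φ : Set (ι → ℚ)}

-- cone lemmas
lemma coneOf_zero_mem (S : Set (ι → ℚ)) : (0 : ι → ℚ) ∈ coneOf S :=
  ⟨0, Fin.elim0, Fin.elim0, fun k => k.elim0, by simp⟩

lemma coneOf_smul_single {S : Set (ι → ℚ)} {c : ℚ} {v : ι → ℚ} (hc : 0 ≤ c) (hv : v ∈ S) :
    c • v ∈ coneOf S :=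
  ⟨1, fun _ => c, fun _ => v, fun _ => ⟨hc, hv⟩, by simp⟩

lemma coneOf_add {S : Set (ι → ℚ)} {x y : ι → ℚ} (hx : x ∈ coneOf S) (hy : y ∈ coneOf S) :
    x + y ∈ coneOf S := by
  obtain ⟨n, c, v, hcv, rfl⟩ := hx
  obtain ⟨m, d, u, hdu, rfl⟩ := hy
  refine ⟨n + m, Fin.append c d, Fin.append v u, ?_, ?_⟩
  · intro k
    refine Fin.addCases (fun i => ?_) (fun i => ?_) k
    · simp only [Fin.append_left]; exact hcv i
    · simp only [Fin.append_right]; exact hdu i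
  · rw [Fin.sum_univ_add]
    simp only [Fin.append_left, Fin.append_right]

lemma coneOf_smul {S : Set (ι → ℚ)} {a : ℚ} {x : ι → ℚ} (ha : 0 ≤ a) (hx : x ∈ coneOf S) :
    a • x ∈ coneOf S := by
  obtain ⟨n, c, v, hcv, rfl⟩ := hx
  refine ⟨n, fun k => a * c k, v, fun k => ⟨mul_nonneg ha (hcv k).1, (hcv k).2⟩, ?_⟩
  rw [Finset.smul_sum]
  refine Finset.sum_congr rfl fun k _ => ?_
  show a • c k • v k = (a * c k) • v k
  rw [smul_smul]

lemma coneOf_subset_coneOf {S T : Set (ι → ℚ)} (h : ∀ v ∈ S, v ∈ coneOf T) :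
    coneOf S ⊆ coneOf T := by
  intro x hx
  obtain ⟨n, c, v, hcv, rfl⟩ := hx
  induction n with
  | zero => simpa using coneOf_zero_mem T
  | succ n ih =>
      rw [Fin.sum_univ_succ]
      refine coneOf_add (coneOf_smul (hcv 0).1 (h _ (hcv 0).2)) ?_
      exact ih (fun k => c k.succ) (fun k => v k.succ) (fun k => hcv k.succ)

lemma coneOf_mono {S T : Set (ι → ℚ)} (h : S ⊆ T) : coneOf S ⊆ coneOf T := by
  rintro x ⟨n, c, v, hcv, rfl⟩
  exact ⟨n, c, v, fun k => ⟨(hcv k).1, h (hcv k).2⟩, rfl⟩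

lemma coneOf_neg_mem {S : Set (ι → ℚ)} {x : ι → ℚ} (hx : x ∈ coneOf S) :
    -x ∈ coneOf ((fun v => -v) '' S) := by
  obtain ⟨n, c, v, hcv, rfl⟩ := hx
  refine ⟨n, c, fun k => -(v k), fun k => ⟨(hcv k).1, ⟨v k, (hcv k).2, rfl⟩⟩, ?_⟩
  rw [← Finset.sum_neg_distrib]
  exact Finset.sum_congr rfl fun k _ => (smul_neg _ _).symm

lemma coneOf_mem_neg_image {S : Set (ι → ℚ)} {x : ι → ℚ}
    (hx : x ∈ coneOf ((fun v => -v) '' S)) : -x ∈ coneOf S := by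
  have h := coneOf_neg_mem hx
  have himg : (fun v : ι → ℚ => -v) '' ((fun v : ι → ℚ => -v) '' S) = S := by
    rw [Set.image_image]; simp
  rwa [himg] at h

-- orbit finiteness
lemma orbit_finite (hΦ : IsPosSystem A Φ) (x : ι → ℚ) : (weylOrbit A x).Finite := by
  have h : weylOrbit A x = (fun w : Function.End (ι → ℚ) => w x) '' (Weyl A : Set _) := by
    ext y
    constructor
    · rintro ⟨w, hw, rfl⟩; exact ⟨w, hw, rfl⟩
    · rintro ⟨w, hw, rfl⟩; exact ⟨w, hw, rfl⟩
  rw [h]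
  exact (weyl_finite hΦ).image _

-- R3 : reflections in roots lie in W
lemma sRef_mem_aux (hΦ : IsPosSystem A Φ) :
    ∀ (n : ℕ) (β : ι → ℚ), β ∈ Φ → β ≠ 0 → (∑ i, β i) = (n : ℚ) →
      sRef hΦ β ∈ Weyl A := by
  intro n
  induction n using Nat.strong_induction_on with
  | _ n ih =>
    intro β hβ h0 hht
    have hBββ : 0 < Bf hΦ β β := Bf_self_pos hΦ h0
    have hexp : Bf hΦ β β = ∑ j, β j * Bf hΦ β (Pi.single j 1) := by
      nth_rewrite 2 [vec_decomp β]
      rw [Bf_sum_right]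
      exact Finset.sum_congr rfl fun j _ => by rw [Bf_smul_right]
    have hex : ∃ j, 0 < β j * Bf hΦ β (Pi.single j 1) := by
      by_contra hcon
      push_neg at hcon
      have : Bf hΦ β β ≤ 0 := by
        rw [hexp]; exact Finset.sum_nonpos fun j _ => hcon j
      linarith
    obtain ⟨j, hj⟩ := hex
    have hβj : 0 < β j := by
      rcases lt_or_ge 0 (β j) with h | h
      · exact h
      · exfalso
        have h0' : β j = 0 := le_antisymm h (phi_nonneg hΦ hβ j)
        rw [h0', zero_mul] at hj
        exact lt_irrefl 0 hj
    have hBβe : 0 < Bf hΦ β (Pi.single j 1) := by nlinarith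
    have hBee : 0 < Bf hΦ (Pi.single j 1 : ι → ℚ) (Pi.single j 1) :=
      Bf_self_pos hΦ (single_one_ne_zero j)
    have hp : 0 < pairRt A β j := by
      have h := pairRt_eq_Bf hΦ β j
      nlinarith
    by_cases hs : β = Pi.single j 1
    · rw [hs, sRef_single hΦ j]; exact reflFun_mem A j
    · have hγ : reflFun A j β ∈ Φ := hΦ.reflect_mem β hβ j hs
      have hγ0 : reflFun A j β ≠ 0 := refl_ne_zero hΦ j h0
      -- height of γ
      have hsum1 : (∑ i, (Pi.single j 1 : ι → ℚ) i) = 1 := by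
        simp [Pi.single_apply]
      have hsumγ : (∑ i, reflFun A j β i) = (n : ℚ) - pairRt A β j := by
        show (∑ i, (β - pairRt A β j • (Pi.single j 1 : ι → ℚ)) i) = (n : ℚ) - pairRt A β j
        simp only [Pi.sub_apply, Pi.smul_apply, smul_eq_mul]
        rw [Finset.sum_sub_distrib, hht, ← Finset.mul_sum, hsum1, mul_one]
      obtain ⟨m, hm⟩ : ∃ m : ℕ, (∑ i, reflFun A j β i) = (m : ℚ) := by
        have hco := hΦ.coords_nat _ hγ
        choose f hf using hco
        refine ⟨∑ i, f i, ?_⟩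
        rw [Nat.cast_sum]
        exact Finset.sum_congr rfl fun i _ => hf i
      have hmn : m < n := by
        have : (m : ℚ) < (n : ℚ) := by rw [← hm, hsumγ]; linarith
        exact_mod_cast this
      have hmem := ih m hmn (reflFun A j β) hγ hγ0 hm
      -- sRef β = s_j * sRef γ * s_j
      have hkey : sRef hΦ β = reflFun A j * sRef hΦ (reflFun A j β) * reflFun A j := by
        funext x
        have h1 : (reflFun A j * sRef hΦ (reflFun A j β) * reflFun A j) x
            = reflFun A j (sRef hΦ (reflFun A j β) (reflFun A j x)) := rfl
        rw [h1, sRef_conj hΦ (reflFun_mem A j)]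
        have hinvol : ∀ y : ι → ℚ, reflFun A j (reflFun A j y) = y := by
          intro y
          exact congrFun (reflFun_invol hΦ j) y
        rw [hinvol, hinvol]
      rw [hkey]
      exact mul_mem (mul_mem (reflFun_mem A j) hmem) (reflFun_mem A j)

lemma sRef_mem (hΦ : IsPosSystem A Φ) {β : ι → ℚ} (hβ : β ∈ Φ) (h0 : β ≠ 0) :
    sRef hΦ β ∈ Weyl A := by
  obtain ⟨m, hm⟩ : ∃ m : ℕ, (∑ i, β i) = (m : ℚ) := by
    choose f hf using hΦ.coords_nat β hβ
    exact ⟨∑ i, f i, by rw [Nat.cast_sum]; exact Finset.sum_congr rfl fun i _ => hf i⟩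
  exact sRef_mem_aux hΦ m β hβ h0 hm

-- Φ⁺(λ) facts
lemma philam_ne_zero {lam β : ι → ℚ} (hβ : β ∈ PhiPlusLam A Φ lam) : β ≠ 0 := by
  obtain ⟨_, i, _, hi⟩ := hβ
  intro h
  rw [h] at hi
  exact hi rfl

lemma Bf_lam_pos (hΦ : IsPosSystem A Φ) {lam : ι → ℚ} (hdom : IsDom A lam) {β : ι → ℚ}
    (hβ : β ∈ PhiPlusLam A Φ lam) : 0 < Bf hΦ lam β := by
  obtain ⟨hβΦ, i₀, hp0, hc0⟩ := hβ
  have hexp : Bf hΦ lam β = ∑ i, β i * Bf hΦ lam (Pi.single i 1) := by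
    nth_rewrite 1 [vec_decomp β]
    rw [Bf_sum_right]
    exact Finset.sum_congr rfl fun i _ => by rw [Bf_smul_right]
  rw [hexp]
  apply Finset.sum_pos'
  · exact fun i _ => mul_nonneg (phi_nonneg hΦ hβΦ i) (Bf_single_nonneg hΦ hdom i)
  · refine ⟨i₀, Finset.mem_univ i₀, ?_⟩
    have h1 : 0 < β i₀ := lt_of_le_of_ne (phi_nonneg hΦ hβΦ i₀) (Ne.symm hc0)
    have h2 : 0 < Bf hΦ lam (Pi.single i₀ 1) := by
      have h := pairRt_eq_Bf hΦ lam i₀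
      have hBee : 0 < Bf hΦ (Pi.single i₀ 1 : ι → ℚ) (Pi.single i₀ 1) :=
        Bf_self_pos hΦ (single_one_ne_zero i₀)
      have hp : 0 < pairRt A lam i₀ := lt_of_le_of_ne (hdom i₀) (Ne.symm hp0)
      nlinarith
    positivity

lemma single_mem_philam {lam : ι → ℚ} (hΦ : IsPosSystem A Φ) {i : ι}
    (hi : pairRt A lam i ≠ 0) : (Pi.single i 1 : ι → ℚ) ∈ PhiPlusLam A Φ lam :=
  ⟨hΦ.simple_mem i, i, hi, by simp⟩

-- the Levi subgroup W_J
def WJ (A : ι → ι → ℤ) (lam : ι → ℚ) : Submonoid (Function.End (ι → ℚ)) :=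
  Submonoid.closure {f | ∃ j, pairRt A lam j = 0 ∧ f = reflFun A j}

lemma WJ_le_weyl {lam : ι → ℚ} : ∀ u ∈ WJ A lam, u ∈ Weyl A := by
  intro u hu
  induction hu using Submonoid.closure_induction with
  | mem f hf => obtain ⟨j, _, rfl⟩ := hf; exact reflFun_mem A j
  | one => exact one_mem _
  | mul f g _ _ ihf ihg => exact mul_mem ihf ihg

lemma WJ_fixes {lam : ι → ℚ} : ∀ u ∈ WJ A lam, u lam = lam := by
  intro u hu
  induction hu using Submonoid.closure_induction with
  | mem f hf =>
      obtain ⟨j, hj, rfl⟩ := hf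
      show lam - pairRt A lam j • (Pi.single j 1 : ι → ℚ) = lam
      rw [hj]; simp
  | one => rfl
  | mul f g _ _ ihf ihg =>
      show f (g lam) = lam
      rw [ihg, ihf]

lemma WJ_inv (hΦ : IsPosSystem A Φ) {lam : ι → ℚ} :
    ∀ u ∈ WJ A lam, ∃ u' ∈ WJ A lam, u * u' = 1 ∧ u' * u = 1 := by
  intro u hu
  induction hu using Submonoid.closure_induction with
  | mem f hf =>
      obtain ⟨j, hj, rfl⟩ := hf
      exact ⟨reflFun A j, Submonoid.subset_closure ⟨j, hj, rfl⟩,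
        reflFun_invol hΦ j, reflFun_invol hΦ j⟩
  | one => exact ⟨1, one_mem _, one_mul 1, one_mul 1⟩
  | mul f g hf hg ihf ihg =>
      obtain ⟨f', hf', hff', hf'f⟩ := ihf
      obtain ⟨g', hg', hgg', hg'g⟩ := ihg
      refine ⟨g' * f', mul_mem hg' hf', ?_, ?_⟩
      · rw [mul_assoc, ← mul_assoc g, hgg', one_mul, hff']
      · rw [mul_assoc, ← mul_assoc f', hf'f, one_mul, hg'g]

lemma WJ_preserves (hΦ : IsPosSystem A Φ) {lam : ι → ℚ} :
    ∀ u ∈ WJ A lam, ∀ β ∈ PhiPlusLam A Φ lam, u β ∈ PhiPlusLam A Φ lam := by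
  intro u hu
  induction hu using Submonoid.closure_induction with
  | mem f hf =>
      obtain ⟨j, hj, rfl⟩ := hf
      rintro β ⟨hβΦ, i, hpi, hci⟩
      have hij : i ≠ j := fun h => hpi (h ▸ hj)
      have hβs : β ≠ Pi.single j 1 := by
        intro h
        apply hci
        rw [h, Pi.single_eq_of_ne hij]
      refine ⟨hΦ.reflect_mem β hβΦ j hβs, i, hpi, ?_⟩
      show (β - pairRt A β j • (Pi.single j 1 : ι → ℚ)) i ≠ 0
      simp only [Pi.sub_apply, Pi.smul_apply, smul_eq_mul]
      rw [Pi.single_eq_of_ne hij]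
      simpa using hci
  | one => exact fun β hβ => hβ
  | mul f g _ _ ihf ihg =>
      intro β hβ
      exact ihf _ (ihg _ hβ)

end Chunk4

-- chunk 5 : lemma A and main theorem
section Chunk5
variable {ι : Type*} [Fintype ι] [DecidableEq ι]
variable {A : ι → ι → ℤ} {Φ : Set (ι → ℚ)}

lemma lemmaA_aux (hΦ : IsPosSystem A Φ) {lam : ι → ℚ} (hdom : IsDom A lam) :
    ∀ (n : ℕ) (μ : ι → ℚ), μ ∈ weylOrbit A lam →
      (((orbit_finite hΦ lam).toFinset).filter
        (fun ν => Bf hΦ lam μ < Bf hΦ lam ν)).card ≤ n →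
      lam - μ ∈ coneOf (PhiPlusLam A Φ lam) := by
  intro n
  induction n using Nat.strong_induction_on with
  | _ n ih =>
    intro μ hμ hcard
    by_cases hex : ∃ β ∈ PhiPlusLam A Φ lam, Bf hΦ μ β < 0
    · obtain ⟨β, hβ, hneg⟩ := hex
      have hβ0 : β ≠ 0 := philam_ne_zero hβ
      have hBββ : 0 < Bf hΦ β β := Bf_self_pos hΦ hβ0
      have hc0 : 2 * Bf hΦ μ β / Bf hΦ β β < 0 :=
        div_neg_of_neg_of_pos (by linarith) hBββ
      obtain ⟨w, hw, hwlam⟩ := hμ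
      have hsW : sRef hΦ β ∈ Weyl A := sRef_mem hΦ hβ.1 hβ0
      have hμ₂mem : sRef hΦ β μ ∈ weylOrbit A lam :=
        ⟨sRef hΦ β * w, mul_mem hsW hw, by rw [← hwlam]; rfl⟩
      have hμ₂eq : sRef hΦ β μ = μ - (2 * Bf hΦ μ β / Bf hΦ β β) • β := rfl
      have hBlamβ : 0 < Bf hΦ lam β := Bf_lam_pos hΦ hdom hβ
      have hBgt : Bf hΦ lam μ < Bf hΦ lam (sRef hΦ β μ) := by
        rw [hμ₂eq, Bf_sub_right, Bf_smul_right]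
        nlinarith
      have hsubset : ((orbit_finite hΦ lam).toFinset).filter
            (fun ν => Bf hΦ lam (sRef hΦ β μ) < Bf hΦ lam ν) ⊆
          ((orbit_finite hΦ lam).toFinset).filter
            (fun ν => Bf hΦ lam μ < Bf hΦ lam ν) := by
        intro ν hv
        rw [Finset.mem_filter] at hv ⊢
        exact ⟨hv.1, lt_trans hBgt hv.2⟩
      have hmemBig : sRef hΦ β μ ∈ ((orbit_finite hΦ lam).toFinset).filter
          (fun ν => Bf hΦ lam μ < Bf hΦ lam ν) :=
        Finset.mem_filter.2 ⟨(orbit_finite hΦ lam).mem_toFinset.2 hμ₂mem, hBgt⟩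
      have hnot : sRef hΦ β μ ∉ ((orbit_finite hΦ lam).toFinset).filter
          (fun ν => Bf hΦ lam (sRef hΦ β μ) < Bf hΦ lam ν) := by
        rw [Finset.mem_filter]
        rintro ⟨-, h⟩
        exact lt_irrefl _ h
      have hlt : (((orbit_finite hΦ lam).toFinset).filter
            (fun ν => Bf hΦ lam (sRef hΦ β μ) < Bf hΦ lam ν)).card <
          (((orbit_finite hΦ lam).toFinset).filter
            (fun ν => Bf hΦ lam μ < Bf hΦ lam ν)).card :=
        Finset.card_lt_card ((Finset.ssubset_iff_of_subset hsubset).2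
          ⟨_, hmemBig, hnot⟩)
      have hrec := ih _ (lt_of_lt_of_le hlt hcard) (sRef hΦ β μ) hμ₂mem le_rfl
      have hdecomp : lam - μ = (lam - sRef hΦ β μ)
          + (-(2 * Bf hΦ μ β / Bf hΦ β β)) • β := by
        rw [hμ₂eq]; module
      rw [hdecomp]
      exact coneOf_add hrec (coneOf_smul_single (by linarith) hβ)
    · push_neg at hex
      obtain ⟨w, hw, hwlam⟩ := hμ
      have hTsub : {ν | ∃ u ∈ WJ A lam, u μ = ν} ⊆ weylOrbit A lam := by
        rintro ν ⟨u, hu, rfl⟩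
        exact ⟨u * w, mul_mem (WJ_le_weyl u hu) hw, by rw [← hwlam]; rfl⟩
      have hTfin : {ν | ∃ u ∈ WJ A lam, u μ = ν}.Finite :=
        (orbit_finite hΦ lam).subset hTsub
      have hTne : μ ∈ hTfin.toFinset := hTfin.mem_toFinset.2 ⟨1, one_mem _, rfl⟩
      obtain ⟨μ', hμ'T, hmax⟩ :=
        hTfin.toFinset.exists_max_image (fun ν => ∑ i, ν i) ⟨μ, hTne⟩
      obtain ⟨u, hu, huμ⟩ := hTfin.mem_toFinset.1 hμ'T
      obtain ⟨u', hu', huu', hu'u⟩ := WJ_inv hΦ u hu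
      have hdomμ' : IsDom A μ' := by
        intro i
        by_cases hzi : pairRt A lam i = 0
        · have hmem2 : reflFun A i μ' ∈ hTfin.toFinset := by
            refine hTfin.mem_toFinset.2 ⟨reflFun A i * u,
              mul_mem (Submonoid.subset_closure ⟨i, hzi, rfl⟩) hu, ?_⟩
            show reflFun A i (u μ) = reflFun A i μ'
            rw [huμ]
          have hle := hmax _ hmem2
          have hsum : (∑ k, reflFun A i μ' k) = (∑ k, μ' k) - pairRt A μ' i := by
            show (∑ k, (μ' - pairRt A μ' i • (Pi.single i 1 : ι → ℚ)) k) = _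
            simp only [Pi.sub_apply, Pi.smul_apply, smul_eq_mul]
            rw [Finset.sum_sub_distrib, ← Finset.mul_sum]
            have h1 : (∑ k, (Pi.single i 1 : ι → ℚ) k) = 1 := by
              simp [Pi.single_apply]
            rw [h1, mul_one]
          rw [hsum] at hle
          linarith
        · have hsingle : (Pi.single i 1 : ι → ℚ) ∈ PhiPlusLam A Φ lam :=
            single_mem_philam hΦ hzi
          have hu'e : u' (Pi.single i 1) ∈ PhiPlusLam A Φ lam :=
            WJ_preserves hΦ u' hu' _ hsingle
          have h1 : u (u' (Pi.single i 1)) = Pi.single i 1 := congrFun huu' _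
          have hBge : 0 ≤ Bf hΦ μ' (Pi.single i 1) := by
            calc (0:ℚ) ≤ Bf hΦ μ (u' (Pi.single i 1)) := hex _ hu'e
              _ = Bf hΦ (u μ) (u (u' (Pi.single i 1))) :=
                  (Bf_invariant hΦ (WJ_le_weyl u hu) _ _).symm
              _ = Bf hΦ μ' (Pi.single i 1) := by rw [huμ, h1]
          have h := pairRt_eq_Bf hΦ μ' i
          have hBee : 0 < Bf hΦ (Pi.single i 1 : ι → ℚ) (Pi.single i 1) :=
            Bf_self_pos hΦ (single_one_ne_zero i)
          nlinarith
      have hμ'lam : μ' = lam := by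
        have h2 : (u * w) lam = μ' := by show u (w lam) = μ'; rw [hwlam, huμ]
        rw [← h2]
        exact dominant_unique hΦ lam hdom (mul_mem (WJ_le_weyl u hu) hw)
          (by rw [h2]; exact hdomμ')
      have hμlam : μ = lam := by
        have h2 : u' μ' = μ := by rw [← huμ]; exact congrFun hu'u μ
        rw [← h2, hμ'lam, WJ_fixes u' hu']
      rw [hμlam, sub_self]
      exact coneOf_zero_mem _

lemma lemmaA (hΦ : IsPosSystem A Φ) {lam : ι → ℚ} (hdom : IsDom A lam) {μ : ι → ℚ}
    (hμ : μ ∈ weylOrbit A lam) : lam - μ ∈ coneOf (PhiPlusLam A Φ lam) :=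
  lemmaA_aux hΦ hdom _ μ hμ le_rfl

lemma hull_sub (hΦ : IsPosSystem A Φ) {lam : ι → ℚ} (hdom : IsDom A lam) {y : ι → ℚ}
    (hy : y ∈ convexHull ℚ (weylOrbit A lam)) :
    y - lam ∈ coneOf ((fun x => -x) '' PhiPlusLam A Φ lam) := by
  have hD : convexHull ℚ (weylOrbit A lam) ⊆
      {y | y - lam ∈ coneOf ((fun x => -x) '' PhiPlusLam A Φ lam)} := by
    apply convexHull_min
    · intro μ hμ
      have h2 := coneOf_neg_mem (lemmaA hΦ hdom hμ)
      have h3 : -(lam - μ) = μ - lam := by module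
      rw [h3] at h2
      exact h2
    · intro y₁ hy₁ y₂ hy₂ a b ha hb hab
      have hy₁' : y₁ - lam ∈ coneOf ((fun x => -x) '' PhiPlusLam A Φ lam) := hy₁
      have hy₂' : y₂ - lam ∈ coneOf ((fun x => -x) '' PhiPlusLam A Φ lam) := hy₂
      show (a • y₁ + b • y₂) - lam ∈ coneOf ((fun x => -x) '' PhiPlusLam A Φ lam)
      have hl : lam = a • lam + b • lam := by rw [← add_smul, hab, one_smul]
      have heq : (a • y₁ + b • y₂) - lam = a • (y₁ - lam) + b • (y₂ - lam) := by
        nth_rewrite 1 [hl]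
        module
      rw [heq]
      exact coneOf_add (coneOf_smul ha hy₁') (coneOf_smul hb hy₂')
  exact hD hy

lemma negroot_mem (hΦ : IsPosSystem A Φ) {lam : ι → ℚ} (hdom : IsDom A lam) {β : ι → ℚ}
    (hβ : β ∈ PhiPlusLam A Φ lam) :
    -β ∈ coneOf ((fun x => x - lam) '' convexHull ℚ (weylOrbit A lam)) := by
  have hβ0 : β ≠ 0 := philam_ne_zero hβ
  have hBββ : 0 < Bf hΦ β β := Bf_self_pos hΦ hβ0
  have hcpos : 0 < 2 * Bf hΦ lam β / Bf hΦ β β :=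
    div_pos (by linarith [Bf_lam_pos hΦ hdom hβ]) hBββ
  have hν : sRef hΦ β lam ∈ weylOrbit A lam :=
    ⟨sRef hΦ β, sRef_mem hΦ hβ.1 hβ0, rfl⟩
  have himg : sRef hΦ β lam - lam ∈
      (fun x => x - lam) '' convexHull ℚ (weylOrbit A lam) :=
    ⟨sRef hΦ β lam, subset_convexHull ℚ _ hν, rfl⟩
  have heq : -β = (2 * Bf hΦ lam β / Bf hΦ β β)⁻¹ • (sRef hΦ β lam - lam) := by
    have h1 : sRef hΦ β lam - lam = -((2 * Bf hΦ lam β / Bf hΦ β β) • β) := by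
      show (lam - (2 * Bf hΦ lam β / Bf hΦ β β) • β) - lam = _
      module
    rw [h1, smul_neg, smul_smul, inv_mul_cancel₀ (ne_of_gt hcpos), one_smul]
  rw [heq]
  exact coneOf_smul_single (inv_nonneg.2 hcpos.le) himg

end Chunk5

theorem cone_eq_cone_of_polytope
    (A : ι → ι → ℤ) (Φ : Set (ι → ℚ)) (hΦ : IsPosSystem A Φ)
    (lam : ι → ℚ) (hdom : IsDom A lam) (hint : IsIntegralWt A lam) :
    coneOf ((fun x => -x) '' PhiPlusLam A Φ lam) =
        coneOf ((fun x => x - lam) '' convexHull ℚ (weylOrbit A lam)) ∧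
      coneOf ((fun x => -x) '' PhiPlusLam A Φ lam) =
        ⋃ n : ℕ, (fun x => x - (n : ℚ) • lam) ''
          convexHull ℚ (weylOrbit A ((n : ℚ) • lam)) := by
  constructor
  · apply Set.Subset.antisymm
    · apply coneOf_subset_coneOf
      rintro v ⟨β, hβ, rfl⟩
      exact negroot_mem hΦ hdom hβ
    · apply coneOf_subset_coneOf
      rintro v ⟨y, hy, rfl⟩
      exact hull_sub hΦ hdom hy
  · ext x
    constructor
    · rintro ⟨k, c, v, hcv, rfl⟩
      -- each v m is the negative of a root in Φ⁺(lam)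
      have hβ : ∀ m, -(v m) ∈ PhiPlusLam A Φ lam := by
        intro m
        obtain ⟨b, hb, hbe⟩ := (hcv m).2
        rw [← hbe, neg_neg]
        exact hb
      set p : Fin k → ℚ := fun m => 2 * Bf hΦ lam (-(v m)) / Bf hΦ (-(v m)) (-(v m)) with hp
      have hppos : ∀ m, 0 < p m := by
        intro m
        exact div_pos (by linarith [Bf_lam_pos hΦ hdom (hβ m)])
          (Bf_self_pos hΦ (philam_ne_zero (hβ m)))
      set ν : Fin k → (ι → ℚ) := fun m => sRef hΦ (-(v m)) lam with hνdef
      have hνmem : ∀ m, ν m ∈ weylOrbit A lam := fun m =>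
        ⟨sRef hΦ (-(v m)), sRef_mem hΦ (hβ m).1 (philam_ne_zero (hβ m)), rfl⟩
      set t : Fin k → ℚ := fun m => c m / p m with ht
      have htnn : ∀ m, 0 ≤ t m := fun m => div_nonneg (hcv m).1 (hppos m).le
      have hterm : ∀ m, c m • v m = t m • ν m - t m • lam := by
        intro m
        have h1 : ν m - lam = p m • v m := by
          show (lam - p m • (-(v m))) - lam = p m • v m
          module
        have h2 : t m • ν m - t m • lam = t m • (ν m - lam) := (smul_sub _ _ _).symm
        rw [h2, h1, smul_smul, ht]
        show c m • v m = (c m / p m * p m) • v m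
        rw [div_mul_cancel₀ _ (ne_of_gt (hppos m))]
      have hx' : (∑ m, c m • v m) = (∑ m, t m • ν m) - (∑ m, t m) • lam := by
        rw [Finset.sum_congr rfl (fun m _ => hterm m), Finset.sum_sub_distrib,
          Finset.sum_smul]
      obtain ⟨n, hn⟩ := exists_nat_ge ((∑ m, t m) + 1)
      have htsum : 0 ≤ ∑ m, t m := Finset.sum_nonneg fun m _ => htnn m
      have hnpos : (0:ℚ) < n := by linarith
      -- the convex combination
      set w : Fin (k+1) → ℚ := Fin.snoc t ((n:ℚ) - ∑ m, t m) with hwdef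
      set z : Fin (k+1) → (ι → ℚ) :=
        Fin.snoc (fun m => (n:ℚ) • ν m) ((n:ℚ) • lam) with hzdef
      have hw0 : ∀ i ∈ Finset.univ, 0 ≤ w i := by
        intro i _
        refine Fin.lastCases ?_ (fun m => ?_) i
        · rw [hwdef]; simp only [Fin.snoc_last]; linarith
        · rw [hwdef]; simp only [Fin.snoc_castSucc]; exact htnn m
      have hsumw : (∑ i, w i) = (n:ℚ) := by
        rw [Fin.sum_univ_castSucc]
        rw [hwdef]
        simp only [Fin.snoc_castSucc, Fin.snoc_last]
        ring
      have hz : ∀ i ∈ Finset.univ, z i ∈ weylOrbit A ((n:ℚ) • lam) := by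
        intro i _
        refine Fin.lastCases ?_ (fun m => ?_) i
        · rw [hzdef]; simp only [Fin.snoc_last]
          exact ⟨1, one_mem _, rfl⟩
        · rw [hzdef]; simp only [Fin.snoc_castSucc]
          have hmem := sRef_mem hΦ (hβ m).1 (philam_ne_zero (hβ m))
          refine ⟨sRef hΦ (-(v m)), hmem, ?_⟩
          rw [(weyl_lin _ hmem).map_smul]
      have hcm := Finset.centerMass_mem_convexHull Finset.univ hw0
        (by rw [hsumw]; exact hnpos) hz
      have hsumwz : (∑ i, w i • z i)
          = (n:ℚ) • ((∑ m, c m • v m) + (n:ℚ) • lam) := by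
        rw [Fin.sum_univ_castSucc]
        rw [hwdef, hzdef]
        simp only [Fin.snoc_castSucc, Fin.snoc_last]
        rw [hx']
        rw [Finset.sum_congr rfl (fun m _ => smul_comm (t m) ((n:ℚ)) (ν m)),
          ← Finset.smul_sum, smul_comm ((n:ℚ) - ∑ m, t m) ((n:ℚ)) lam, ← smul_add]
        congr 1
        module
      have hcmval : Finset.univ.centerMass w z = (∑ m, c m • v m) + (n:ℚ) • lam := by
        rw [Finset.centerMass, hsumw, hsumwz, smul_smul,
          inv_mul_cancel₀ (ne_of_gt hnpos), one_smul]
      rw [hcmval] at hcm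
      refine Set.mem_iUnion.2 ⟨n, ⟨(∑ m, c m • v m) + (n:ℚ) • lam, hcm, ?_⟩⟩
      show (∑ m, c m • v m) + (n:ℚ) • lam - (n:ℚ) • lam = ∑ m, c m • v m
      rw [add_sub_cancel_right]
    · intro hx
      obtain ⟨Sn, ⟨n, rfl⟩, hxS⟩ := hx
      obtain ⟨y, hy, rfl⟩ := hxS
      have hdom' : IsDom A ((n:ℚ) • lam) := by
        intro j
        rw [pairRt_smul]
        exact mul_nonneg (by positivity) (hdom j)
      have h1 := hull_sub hΦ hdom' hy
      refine coneOf_mono ?_ h1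
      apply Set.image_mono
      rintro β ⟨hβΦ, i, hpi, hci⟩
      refine ⟨hβΦ, i, ?_, hci⟩
      intro h
      apply hpi
      rw [pairRt_smul, h, mul_zero]
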